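/- arXiv:2306.06422 — 4 statements merged into one kernel-verified Lean document; each statement's English description precedes it below -/
import Mathlib

section
/- Let A and B be finite abelian groups of orders n and m respectively, with m dividing n, and let f : A → B be perfect nonlinear (i.e., for every nonzero a ∈ A the map x ↦ f(x+a) − f(x) is balanced). For b ∈ B set k_b = |f⁻¹(b)|. Then ∑_{z∈B} k_z² = (n² + (m−1)n)/m, ∑_{z∈B} k_z k_{z+b} = n(n−1)/m for every nonzero b ∈ B, and ∑_{z∈B} k_z = n. -/
open Finset

section DifferenceCount

variable {A B : Type*} [AddCommGroup A] [Fintype A] [AddCommGroup B] [DecidableEq B]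

/-- Both sides count the pairs `(x, y)` with `f y - f x = b`, sorted by `f x` resp. by `y - x`. -/
theorem sum_card_fiber_mul_card_fiber_add [Fintype B] (f : A → B) (b : B) :
    ∑ z, #{x | f x = z} * #{x | f x = z + b} = ∑ a, #{x | f (x + a) - f x = b} :=
  calc ∑ z, #{x | f x = z} * #{x | f x = z + b}
      = ∑ x, #{y | f y = f x + b} := by
        simp only [← smul_eq_mul, ← sum_const]
        exact sum_fiberwise' _ f fun z => #{y | f y = z + b}
    _ = ∑ x, #{a | f (x + a) - f x = b} := by
        refine sum_congr rfl fun x _ => ?_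
        simp only [card_filter, sub_eq_iff_eq_add']
        exact (Fintype.sum_equiv (Equiv.addLeft x) _ _ fun _ => rfl).symm
    _ = ∑ a, #{x | f (x + a) - f x = b} := by
        simp only [card_filter]
        exact sum_comm

theorem sum_card_diff_eq_of_balanced (f : A → B) {c : ℕ}
    (hf : ∀ a : A, a ≠ 0 → ∀ b : B, #{x | f (x + a) - f x = b} = c) (b : B) :
    ∑ a, #{x | f (x + a) - f x = b} =
      (Fintype.card A - 1) * c + if b = 0 then Fintype.card A else 0 := by
  classical
  rw [← sum_erase_add _ _ (mem_univ 0), sum_const_nat fun a ha => hf a (ne_of_mem_erase ha) b,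
    card_erase_of_mem (mem_univ 0), card_univ]
  split_ifs with hb <;> simp [hb, eq_comm]

end DifferenceCount

theorem stmt_0_general (A B : Type*) [AddCommGroup A] [Fintype A]
    [AddCommGroup B] [Fintype B] [DecidableEq B]
    (n m : ℕ) (hn : n = Fintype.card A) (hdvd : m ∣ n)
    (f : A → B)
    (hPN : ∀ a : A, a ≠ 0 → ∀ b : B,
      (univ.filter (fun x : A => f (x + a) - f x = b)).card = n / m)
    (k : B → ℕ) (hk : ∀ b : B, k b = (univ.filter (fun x : A => f x = b)).card) :
    (∑ z : B, (k z : ℚ) ^ 2 = ((n : ℚ) ^ 2 + ((m : ℚ) - 1) * n) / m) ∧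
    (∀ b : B, b ≠ 0 → ∑ z : B, (k z : ℚ) * (k (z + b) : ℚ) = (n : ℚ) * ((n : ℚ) - 1) / m) ∧
    (∑ z : B, k z = n) := by
  obtain rfl : k = fun b => #{x | f x = b} := funext hk
  have hn1 : 1 ≤ n := hn ▸ Fintype.card_pos
  have hm0 : (m : ℚ) ≠ 0 := by exact_mod_cast (Nat.pos_of_dvd_of_pos hdvd hn1).ne'
  have hcorr (b : B) : ∑ z, (#{x | f x = z} : ℚ) * #{x | f x = z + b} =
      (n - 1) * (n / m) + if b = 0 then (n : ℚ) else 0 := by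
    have h := sum_card_fiber_mul_card_fiber_add f b
    rw [sum_card_diff_eq_of_balanced f hPN, ← hn] at h
    have hq := congrArg (Nat.cast : ℕ → ℚ) h
    push_cast [Nat.cast_sub hn1, Nat.cast_div hdvd hm0] at hq
    exact hq
  refine ⟨?_, fun b hb => ?_, ?_⟩
  · have h0 := hcorr 0
    simp only [add_zero, if_pos] at h0
    simp only [sq, h0]
    field_simp
    ring
  · rw [hcorr b, if_neg hb]
    field_simp
    ring
  · rw [hn, sum_card_fiberwise_eq_card_filter]
    simp

/-- value-distribution equations for a perfect nonlinear map between
finite abelian groups. -/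
theorem stmt_0 (A B : Type*) [AddCommGroup A] [Fintype A] [DecidableEq A]
    [AddCommGroup B] [Fintype B] [DecidableEq B]
    (n m : ℕ) (hn : n = Fintype.card A) (hm : m = Fintype.card B) (hdvd : m ∣ n)
    (f : A → B)
    (hPN : ∀ a : A, a ≠ 0 → ∀ b : B,
      (univ.filter (fun x : A => f (x + a) - f x = b)).card = n / m)
    (k : B → ℕ) (hk : ∀ b : B, k b = (univ.filter (fun x : A => f x = b)).card) :
    (∑ z : B, (k z : ℚ) ^ 2 = ((n : ℚ) ^ 2 + ((m : ℚ) - 1) * n) / m) ∧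
    (∀ b : B, b ≠ 0 → ∑ z : B, (k z : ℚ) * (k (z + b) : ℚ) = (n : ℚ) * ((n : ℚ) - 1) / m) ∧
    (∑ z : B, k z = n) :=
  stmt_0_general A B n m hn hdvd f hPN k hk
end

section
/- Let p be an odd prime and f : 𝔽_{p^m} → 𝔽_p a function. Then f is perfect nonlinear (every difference function D_a f(x) = f(x+a) − f(x), a ≠ 0, is balanced) if and only if f is bent, i.e., |W_f(a)| = p^{m/2} for all a ∈ 𝔽_{p^m}, where W_f(a) = ∑_{x∈𝔽_{p^m}} ξ_p^{f(x) + Tr(ax)}. -/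
/-!
Write `e(b) = ξ^b` for the additive character of `𝔽_p` and `ψ(x) = e(Tr x)` for the induced
primitive character of `F`. With `g = e ∘ f`, the Walsh transform is the Fourier transform of `g`
and `|W_f(a)|²` is the Fourier transform of the autocorrelation `C(u) = ∑_y g(y+u) conj(g(y))`.
Since `C(0) = |F|`, Fourier inversion shows that `|W_f|² ≡ |F|` iff `C(u) = 0` for all `u ≠ 0`.
Grouping by the values of the derivative, `C(u) = ∑_b N_u(b) ξ^b`, where `N_u(b)` is the number of
`x` with `f(x+u) - f(x) = b`. As the cyclotomic polynomial `1 + X + ⋯ + X^{p-1}` is the minimal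
polynomial of `ξ` over `ℚ`, such a sum vanishes iff all `N_u(b)` are equal, that is, all equal to
`p^m / p`.
-/

open Finset ComplexConjugate

namespace IsPrimitiveRoot

variable {K : Type*} [Field K] {p : ℕ} [Fact p.Prime] {ξ : K}

theorem sum_pow_val_eq_zero (hξ : IsPrimitiveRoot ξ p) : ∑ b : ZMod p, ξ ^ b.val = 0 := by
  simpa [AddChar.zmodChar_apply] using
    AddChar.sum_mulShift 1 (AddChar.zmodChar_primitive_of_primitive_root p hξ)

open Polynomial in
theorem sum_mul_pow_val_eq_zero_iff [CharZero K] (hξ : IsPrimitiveRoot ξ p) (c : ZMod p → ℚ) :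
    ∑ b, (c b : K) * ξ ^ b.val = 0 ↔ ∀ b, c b = c 0 := by
  refine ⟨fun h => ?_, fun h => by simp [h, ← mul_sum, hξ.sum_pow_val_eq_zero]⟩
  set Q : ℚ[X] := ∑ b, C (c b) * X ^ b.val
  have hQ_coeff (b : ZMod p) : Q.coeff b.val = c b := by
    simp [Q, (ZMod.val_injective p).eq_iff]
  have hΦ_coeff (b : ZMod p) : (cyclotomic p ℚ).coeff b.val = 1 := by
    simp [cyclotomic_prime, ZMod.val_lt b]
  have hdvd : cyclotomic p ℚ ∣ Q := by
    rw [cyclotomic_eq_minpoly_rat hξ (Fact.out : p.Prime).pos]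
    exact minpoly.dvd ℚ ξ (by simpa [Q, map_sum] using h)
  have hdeg : Q.natDegree ≤ (cyclotomic p ℚ).natDegree := by
    rw [natDegree_cyclotomic, Nat.totient_prime Fact.out]
    refine natDegree_sum_le_of_forall_le _ _ fun b _ => (natDegree_C_mul_le _ _).trans ?_
    simpa using Nat.le_sub_one_of_lt (ZMod.val_lt b)
  have hQ := eq_mul_leadingCoeff_of_monic_of_dvd_of_natDegree_le (cyclotomic.monic p ℚ) hdvd hdeg
  intro b
  rw [← hQ_coeff, ← hQ_coeff, hQ, coeff_mul_C, coeff_mul_C, hΦ_coeff, hΦ_coeff]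

theorem forall_eq_iff_sum_mul_pow_val_eq_zero [CharZero K] (hξ : IsPrimitiveRoot ξ p)
    {c : ZMod p → ℕ} {k : ℕ} (hc : ∑ b, c b = p * k) :
    (∀ b, c b = k) ↔ ∑ b, (c b : K) * ξ ^ b.val = 0 := by
  have h_iff := hξ.sum_mul_pow_val_eq_zero_iff (fun b => c b)
  simp only [Rat.cast_natCast, Nat.cast_inj] at h_iff
  rw [h_iff]
  refine ⟨fun h b => by rw [h, h], fun h b => ?_⟩
  have : p * c 0 = p * k := by simp [← hc, Fintype.sum_congr _ _ h]
  rw [h, Nat.eq_of_mul_eq_mul_left (Fact.out : p.Prime).pos this]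

end IsPrimitiveRoot

def autocorrelation {G : Type*} [Fintype G] [Add G] (g : G → ℂ) (u : G) : ℂ :=
  ∑ y, g (y + u) * conj (g y)

section Fourier

variable {R : Type*} [CommRing R] [Fintype R]

theorem mul_conj_sum_mul_addChar_eq (ψ : AddChar R ℂ) (g : R → ℂ) (a : R) :
    (∑ x, g x * ψ (a * x)) * conj (∑ x, g x * ψ (a * x)) =
      ∑ u, ψ (a * u) * autocorrelation g u := by
  rw [map_sum, sum_mul_sum, sum_comm]
  simp only [autocorrelation, mul_sum]
  conv_rhs => rw [sum_comm]
  refine sum_congr rfl fun y _ => (Fintype.sum_equiv (Equiv.addLeft y) _ _ fun u => ?_).symm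
  rw [Equiv.coe_addLeft, show a * u = a * (y + u) + -(a * y) by ring, AddChar.map_add_eq_mul,
    AddChar.map_neg_eq_conj, map_mul (starRingEnd ℂ)]
  ring

theorem sum_mul_addChar_neg_eq_card_mul [DecidableEq R] {ψ : AddChar R ℂ} (hψ : ψ.IsPrimitive)
    {S C : R → ℂ} (hS : ∀ a, S a = ∑ u, ψ (a * u) * C u) (v : R) :
    ∑ a, S a * ψ (-(a * v)) = Fintype.card R * C v := by
  have h_shift (a u : R) : ψ (a * u) * C u * ψ (-(a * v)) = ψ (a * (u - v)) * C u := by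
    rw [mul_right_comm, ← AddChar.map_add_eq_mul, mul_sub, sub_eq_add_neg]
  simp_rw [hS, sum_mul, h_shift]
  rw [sum_comm]
  simp_rw [← sum_mul, AddChar.sum_mulShift _ hψ, sub_eq_zero]
  simp

theorem norm_sum_mul_addChar_eq_sqrt_card_iff {ψ : AddChar R ℂ} (hψ : ψ.IsPrimitive) {g : R → ℂ}
    (hg : ∀ x, ‖g x‖ = 1) :
    (∀ a, ‖∑ x, g x * ψ (a * x)‖ = √(Fintype.card R)) ↔ ∀ u ≠ 0, autocorrelation g u = 0 := by
  classical
  have hsq (a : R) : (‖∑ x, g x * ψ (a * x)‖ : ℂ) ^ 2 = ∑ u, ψ (a * u) * autocorrelation g u := by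
    rw [← Complex.mul_conj', mul_conj_sum_mul_addChar_eq]
  constructor
  · intro hW v hv
    have h := sum_mul_addChar_neg_eq_card_mul hψ hsq v
    simp only [hW, ← Complex.ofReal_pow, Real.sq_sqrt (Nat.cast_nonneg _), ← mul_neg,
      Complex.ofReal_natCast, ← mul_sum, AddChar.sum_mulShift _ hψ, neg_eq_zero, hv, if_false,
      Nat.cast_zero, mul_zero] at h
    exact (mul_eq_zero.1 h.symm).resolve_left (Nat.cast_ne_zero.2 Fintype.card_ne_zero)
  · intro hC a
    have h0 : autocorrelation g 0 = Fintype.card R := by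
      simp [autocorrelation, Complex.mul_conj', hg]
    have h : (‖∑ x, g x * ψ (a * x)‖ : ℂ) ^ 2 = Fintype.card R := by
      rw [hsq, sum_eq_single 0 (fun u _ hu => by rw [hC u hu, mul_zero]) (by simp), h0]
      simp
    rw [← Real.sqrt_sq (norm_nonneg _), (by exact_mod_cast h : ‖∑ x, g x * ψ (a * x)‖ ^ 2 = _)]

end Fourier

theorem autocorrelation_zmodChar_comp {G : Type*} [Fintype G] [AddGroup G] {p : ℕ} [NeZero p]
    {ξ : ℂ} (hξ : ξ ^ p = 1) (f : G → ZMod p) (u : G) :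
    autocorrelation (fun x => AddChar.zmodChar p hξ (f x)) u =
      ∑ b : ZMod p, ((univ.filter fun x => f (x + u) - f x = b).card : ℂ) * ξ ^ b.val := by
  simp only [autocorrelation, ← AddChar.map_neg_eq_conj, ← AddChar.map_add_eq_mul,
    ← sub_eq_add_neg]
  rw [← sum_fiberwise univ (fun x => f (x + u) - f x)]
  refine sum_congr rfl fun b _ => ?_
  rw [sum_congr rfl fun x hx => by rw [(mem_filter.1 hx).2], sum_const, nsmul_eq_mul,
    AddChar.zmodChar_apply]

theorem AddChar.isPrimitive_zmodChar_comp_trace {p : ℕ} [Fact p.Prime] {ξ : ℂ}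
    (hξ : IsPrimitiveRoot ξ p) (F : Type*) [Field F] [Finite F] [Algebra (ZMod p) F] :
    ((zmodChar p hξ.pow_eq_one).compAddMonoidHom
      (Algebra.trace (ZMod p) F).toAddMonoidHom).IsPrimitive := by
  have : FiniteDimensional (ZMod p) F := Module.Finite.of_finite
  refine IsPrimitive.of_ne_one (ne_one_iff.2 ?_)
  obtain ⟨x, hx⟩ := Algebra.trace_surjective (ZMod p) F 1
  refine ⟨x, ?_⟩
  simpa [zmodChar_apply, hx, ZMod.val_one] using hξ.ne_one (Fact.out : p.Prime).one_lt

theorem stmt_2_general (p m : ℕ) [Fact p.Prime] (hm : 0 < m)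
    (F : Type*) [Field F] [Fintype F] [Algebra (ZMod p) F]
    (hF : Fintype.card F = p ^ m)
    (ξ : ℂ) (hξ : IsPrimitiveRoot ξ p)
    (f : F → ZMod p) :
    (∀ a : F, a ≠ 0 → ∀ b : ZMod p,
        (univ.filter (fun x : F => f (x + a) - f x = b)).card = p ^ (m - 1)) ↔
    (∀ a : F, ‖∑ x : F,
        ξ ^ (f x + Algebra.trace (ZMod p) F (a * x)).val‖ = Real.sqrt (p ^ m)) := by
  set e := AddChar.zmodChar p hξ.pow_eq_one
  have hW (a : F) : ∑ x : F, ξ ^ (f x + Algebra.trace (ZMod p) F (a * x)).val =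
      ∑ x, e (f x) * (e.compAddMonoidHom (Algebra.trace (ZMod p) F).toAddMonoidHom) (a * x) :=
    sum_congr rfl fun x _ => e.map_add_eq_mul _ _
  have hbent := norm_sum_mul_addChar_eq_sqrt_card_iff
    (AddChar.isPrimitive_zmodChar_comp_trace hξ F) (fun x => AddChar.norm_apply e (f x))
  simp only [hW, hF, Nat.cast_pow] at hbent ⊢
  rw [hbent]
  refine forall₂_congr fun u _ => ?_
  rw [autocorrelation_zmodChar_comp]
  refine hξ.forall_eq_iff_sum_mul_pow_val_eq_zero ?_
  rw [← pow_succ', Nat.sub_add_cancel hm, ← hF]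
  exact (card_eq_sum_card_fiberwise fun x _ => mem_univ _).symm

/-- For an odd prime `p` and `f : 𝔽_{p^m} → 𝔽_p`, perfect nonlinearity is
equivalent to bentness: `|W_f(a)| = p^{m/2}` for all `a`, where
`W_f(a) = ∑_x ξ_p^{f(x) + Tr(ax)}`. -/
theorem stmt_2 (p m : ℕ) [Fact p.Prime] (hp : Odd p) (hm : 0 < m)
    (F : Type*) [Field F] [Fintype F] [DecidableEq F] [Algebra (ZMod p) F]
    (hF : Fintype.card F = p ^ m)
    (ξ : ℂ) (hξ : IsPrimitiveRoot ξ p)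
    (f : F → ZMod p) :
    (∀ a : F, a ≠ 0 → ∀ b : ZMod p,
        (univ.filter (fun x : F => f (x + a) - f x = b)).card = p ^ (m - 1)) ↔
    (∀ a : F, ‖∑ x : F,
        ξ ^ (f x + Algebra.trace (ZMod p) F (a * x)).val‖ = Real.sqrt (p ^ m)) :=
  stmt_2_general p m hm F hF ξ hξ f
end

section
/- Let p be an odd prime, m even, and f : 𝔽_{p^m} → 𝔽_p a bent function. Then there exists s ∈ {0, …, p−1} and a sign ε ∈ {±1} such that |f⁻¹(s)| = p^{m−1} + ε(p−1)p^{m/2−1} and |f⁻¹(i)| = p^{m−1} − ε p^{m/2−1} for all i ≠ s. -/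
/-!
The Walsh coefficient `W = W_f(0) = ∑ₓ ξ^{f(x)} = ∑ᵢ Nᵢ ξ^i` (with `Nᵢ = |f⁻¹(i)|`) is an
algebraic integer of `K = ℚ(ξ)` with `W · W̄ = p^m`. The prime `π = ξ - 1` satisfies
`(p) = (π)^{p-1}` and is fixed up to a unit by complex conjugation, so comparing `π`-adic
valuations gives `W = p^{m/2} u` with `u ū = 1`. All conjugates of `u` then have absolute value
`1`, so by Kronecker `u` is a root of unity of `K`, i.e. `u = ±ξ^s`. Since the only `ℤ`-linear
relation among `1, ξ, …, ξ^{p-1}` is their sum, `Nᵢ ∓ p^{m/2} δᵢₛ` is independent of `i`, and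
counting `∑ᵢ Nᵢ = p^m` determines the constant.
-/

open Finset

theorem associated_pow_of_associated_mul_map {R F : Type*} [CommMonoidWithZero R]
    [IsCancelMulZero R] [FunLike F R R] [MonoidHomClass F R R] {π x : R} (hπ : Prime π) (σ : F)
    (hσπ : Associated (σ π) π) {n : ℕ} (hx : Associated (x * σ x) (π ^ (2 * n))) :
    Associated x (π ^ n) := by
  obtain ⟨i, -, hxi⟩ := (dvd_prime_pow hπ _).mp (dvd_of_mul_right_dvd hx.dvd)
  have hσx : Associated (σ x) (π ^ i) := by
    have h := hxi.map σ
    rw [map_pow] at h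
    exact h.trans hσπ.pow_pow
  have h : Associated (π ^ (2 * i)) (π ^ (2 * n)) := by
    rw [two_mul, pow_add]
    exact (hxi.mul_mul hσx).symm.trans hx
  obtain rfl : i = n := by
    have := le_antisymm ((pow_dvd_pow_iff hπ.ne_zero hπ.not_isUnit).mp h.dvd)
      ((pow_dvd_pow_iff hπ.ne_zero hπ.not_isUnit).mp h.symm.dvd)
    omega
  exact hxi

namespace NumberField.IsCMField

open ComplexEmbedding
open scoped ComplexConjugate

variable {K : Type*} [Field K] [NumberField K] [IsCMField K]

theorem _root_.IsPrimitiveRoot.complexConj_eq_inv {ζ : K} {n : ℕ} [NeZero n]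
    (hζ : IsPrimitiveRoot ζ n) : complexConj K ζ = ζ⁻¹ := by
  let φ : K →+* ℂ := Classical.choice inferInstance
  apply φ.injective
  rw [complexEmbedding_complexConj, map_inv₀]
  exact (Complex.inv_eq_conj (Complex.norm_eq_one_of_pow_eq_one
    (by rw [← map_pow, hζ.pow_eq_one, map_one]) (NeZero.ne n))).symm

theorem associated_complexConj_zeta_sub_one {ζ : K} {n : ℕ} [NeZero n]
    (hζ : IsPrimitiveRoot ζ n) :
    Associated (ringOfIntegersComplexConj K (hζ.toInteger - 1)) (hζ.toInteger - 1) := by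
  have : ringOfIntegersComplexConj K (hζ.toInteger - 1) = hζ.inv.toInteger - 1 := by
    ext
    simp only [coe_ringOfIntegersComplexConj, map_sub, map_one]
    exact congrArg (· - 1) hζ.complexConj_eq_inv
  rw [this]
  exact (IsCyclotomicExtension.Rat.associated_sub_one_of_isPrimitiveRoot n hζ hζ.inv).symm

theorem mul_ringOfIntegersComplexConj_eq_of_norm_sq (φ : K →+* ℂ) {x : 𝓞 K} {a : ℕ}
    (h : ‖φ x‖ ^ 2 = a) : x * ringOfIntegersComplexConj K x = a := by
  have hφ : φ (x * complexConj K x) = a := by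
    rw [map_mul, complexEmbedding_complexConj, Complex.mul_conj, Complex.normSq_eq_norm_sq, h]
    push_cast
    rfl
  apply RingOfIntegers.ext
  apply φ.injective
  simpa using hφ

theorem isOfFinOrder_of_mul_complexConj_eq_one {x : 𝓞 K}
    (hx : x * ringOfIntegersComplexConj K x = 1) : IsOfFinOrder (x : K) := by
  suffices h : ∀ φ : K →+* ℂ, ‖φ x‖ = 1 by
    obtain ⟨k, hk, hxk⟩ := Embeddings.pow_eq_one_of_norm_eq_one K ℂ x.isIntegral_coe h
    exact isOfFinOrder_iff_pow_eq_one.mpr ⟨k, hk, hxk⟩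
  intro φ
  have h : φ x * conj (φ x) = 1 := by
    have h : (x : K) * complexConj K x = 1 := by
      simpa using congrArg (fun y : 𝓞 K ↦ (y : K)) hx
    rw [← complexEmbedding_complexConj, ← map_mul, h, map_one]
  rw [Complex.mul_conj, Complex.normSq_eq_norm_sq] at h
  exact (pow_eq_one_iff_of_nonneg (norm_nonneg _) two_ne_zero).mp (by exact_mod_cast h)

end NumberField.IsCMField

namespace IsCyclotomicExtension.Rat

open NumberField NumberField.IsCMField

variable {p : ℕ} [Fact p.Prime] {K : Type*} [Field K] [NumberField K] [IsCMField K]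
  [IsCyclotomicExtension {p} ℚ K]

theorem associated_of_mul_complexConj_eq_pow {x : 𝓞 K} {n : ℕ}
    (hx : x * ringOfIntegersComplexConj K x = (p : 𝓞 K) ^ (2 * n)) :
    Associated x ((p : 𝓞 K) ^ n) := by
  have hζ := zeta_spec p ℚ K
  have hp := associated_zeta_sub_one_pow_prime p hζ
  have h := associated_pow_of_associated_mul_map hζ.zeta_sub_one_prime'
    (ringOfIntegersComplexConj K) (associated_complexConj_zeta_sub_one hζ) (n := (p - 1) * n)
    (by rw [hx, show 2 * ((p - 1) * n) = (p - 1) * (2 * n) by ring, pow_mul _ (p - 1)]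
        exact hp.pow_pow.symm)
  rw [pow_mul] at h
  exact h.trans hp.pow_pow

theorem exists_eq_sign_mul_pow_mul_zeta_pow (hp : Odd p) {ζ : K} (hζ : IsPrimitiveRoot ζ p)
    {x : 𝓞 K} {n : ℕ} (hx : x * ringOfIntegersComplexConj K x = (p : 𝓞 K) ^ (2 * n)) :
    ∃ r < p, ∃ ε : ℤ, (ε = 1 ∨ ε = -1) ∧ (x : K) = ε * p ^ n * ζ ^ r := by
  obtain ⟨u, hu⟩ := (associated_of_mul_complexConj_eq_pow hx).symm
  have hpn : (p : 𝓞 K) ^ n ≠ 0 := pow_ne_zero _ (Nat.cast_ne_zero.mpr (NeZero.ne p))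
  have hu1 : (u : 𝓞 K) * ringOfIntegersComplexConj K u = 1 := by
    rw [← hu, map_mul, map_pow, map_natCast, pow_mul, sq, ← mul_one ((p : 𝓞 K) ^ n * _)] at hx
    apply mul_left_cancel₀ (mul_ne_zero hpn hpn)
    linear_combination hx
  obtain ⟨r, hr, hur⟩ := hζ.exists_pow_or_neg_mul_pow_of_isOfFinOrder hp
    (isOfFinOrder_of_mul_complexConj_eq_one hu1)
  refine ⟨r, hr, ?_⟩
  rcases hur with h | h
  · exact ⟨1, .inl rfl, by rw [← hu]; push_cast [h]; ring⟩
  · exact ⟨-1, .inr rfl, by rw [← hu]; push_cast [h]; ring⟩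

end IsCyclotomicExtension.Rat

namespace IsPrimitiveRoot

open NumberField NumberField.IsCMField IntermediateField in
theorem exists_sum_pow_eq_sign_mul_of_norm_sq_eq {p : ℕ} [Fact p.Prime] (hp : Odd p) {ξ : ℂ}
    (hξ : IsPrimitiveRoot ξ p) {α : Type*} [Fintype α] (g : α → ℕ) {n : ℕ}
    (h : ‖∑ y, ξ ^ g y‖ ^ 2 = (p : ℝ) ^ (2 * n)) :
    ∃ r < p, ∃ ε : ℤ, (ε = 1 ∨ ε = -1) ∧ ∑ y, ξ ^ g y = ε * p ^ n * ξ ^ r := by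
  have : IsCyclotomicExtension {p} ℚ ℚ⟮ξ⟯ :=
    (isCyclotomicExtension_singleton_iff_eq_adjoin p ℚ ℂ ℚ⟮ξ⟯ hξ).mpr rfl
  have : NumberField ℚ⟮ξ⟯ := IsCyclotomicExtension.numberField {p} ℚ ℚ⟮ξ⟯
  have : IsCMField ℚ⟮ξ⟯ := IsCyclotomicExtension.Rat.isCMField ℚ⟮ξ⟯ (S := {p})
    ⟨p, rfl, (Fact.out : p.Prime).two_le.lt_of_ne (by rintro rfl; exact absurd hp (by decide))⟩
  have hζ : IsPrimitiveRoot (AdjoinSimple.gen ℚ ξ) p :=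
    hξ.of_map_of_injective (f := algebraMap ℚ⟮ξ⟯ ℂ) (algebraMap ℚ⟮ξ⟯ ℂ).injective
  set x : 𝓞 ℚ⟮ξ⟯ := ∑ y, hζ.toInteger ^ g y
  have hxξ : algebraMap ℚ⟮ξ⟯ ℂ x = ∑ y, ξ ^ g y := by simp [x]; rfl
  have hx : x * ringOfIntegersComplexConj ℚ⟮ξ⟯ x = (p : 𝓞 ℚ⟮ξ⟯) ^ (2 * n) := by
    exact_mod_cast mul_ringOfIntegersComplexConj_eq_of_norm_sq (algebraMap ℚ⟮ξ⟯ ℂ)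
      (a := p ^ (2 * n)) (by rw [hxξ, h]; push_cast; rfl)
  obtain ⟨r, hr, ε, hε, hxr⟩ :=
    IsCyclotomicExtension.Rat.exists_eq_sign_mul_pow_mul_zeta_pow hp hζ hx
  exact ⟨r, hr, ε, hε, by rw [← hxξ, hxr]; simp⟩

open Polynomial

variable {L : Type*} [Field L] [CharZero L] {p : ℕ} [Fact p.Prime] {ξ : L}

theorem eq_of_sum_intCast_mul_pow_eq_zero (hξ : IsPrimitiveRoot ξ p) {c : ZMod p → ℤ}
    (h : ∑ j, (c j : L) * ξ ^ j.val = 0) (i j : ZMod p) : c i = c j := by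
  set Q : ℚ[X] := ∑ j, C (c j : ℚ) * X ^ j.val
  have hcoeff (k : ZMod p) : Q.coeff k.val = c k := by
    simp [Q, ZMod.val_injective p |>.eq_iff]
  obtain ⟨D, hD⟩ : cyclotomic p ℚ ∣ Q := by
    rw [cyclotomic_eq_minpoly_rat hξ (NeZero.pos p)]
    exact minpoly.dvd ℚ ξ (by simpa [Q] using h)
  have hDC : D = C (D.coeff 0) := by
    rcases eq_or_ne D 0 with rfl | hD0
    · simp
    apply eq_C_of_natDegree_eq_zero
    have hdeg : Q.natDegree ≤ p - 1 :=
      natDegree_sum_le_of_forall_le _ _ fun j _ ↦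
        (natDegree_C_mul_X_pow_le _ _).trans (Nat.le_sub_one_of_lt j.val_lt)
    have := natDegree_mul (cyclotomic_ne_zero p ℚ) hD0
    rw [← hD, natDegree_cyclotomic, Nat.totient_prime Fact.out] at this
    omega
  have hconst (k : ZMod p) : (c k : ℚ) = D.coeff 0 := by
    rw [← hcoeff, hD, hDC, coeff_mul_C, cyclotomic_prime, finsetSum_coeff]
    simp [coeff_X_pow, k.val_lt]
  exact_mod_cast (hconst i).trans (hconst j).symm

theorem exists_card_fiber_eq_of_sum_pow_eq (hξ : IsPrimitiveRoot ξ p) {α : Type*} [Fintype α]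
    (f : α → ZMod p) {c : ℤ} {s : ZMod p} (h : ∑ y, ξ ^ (f y).val = c * ξ ^ s.val) :
    ∃ e : ℤ, p * e + c = Fintype.card α ∧
      ∀ i, (#{y | f y = i} : ℤ) = e + if i = s then c else 0 := by
  set N : ZMod p → ℤ := fun i ↦ #{y | f y = i}
  have hfiber : ∑ y, ξ ^ (f y).val = ∑ i, (N i : L) * ξ ^ i.val := by
    rw [← sum_fiberwise univ f]
    refine sum_congr rfl fun i _ ↦ ?_
    rw [sum_congr rfl fun y hy ↦ by rw [(mem_filter.mp hy).2], sum_const, nsmul_eq_mul]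
    simp [N]
  set d : ZMod p → ℤ := fun i ↦ N i - if i = s then c else 0
  have hd : ∑ i, (d i : L) * ξ ^ i.val = 0 := by
    simp only [d, Int.cast_sub, Int.cast_ite, Int.cast_zero, sub_mul, ite_mul, zero_mul,
      sum_sub_distrib, sum_ite_eq', mem_univ, if_true, ← hfiber, h, sub_self]
  have hN (i : ZMod p) : N i = d s + if i = s then c else 0 := by
    rw [← hξ.eq_of_sum_intCast_mul_pow_eq_zero hd i s]
    ring
  refine ⟨d s, ?_, hN⟩
  have hcard : ∑ i, N i = Fintype.card α := by
    simp only [N]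
    exact_mod_cast (card_eq_sum_card_fiberwise fun y _ ↦ mem_univ (f y)).symm
  rw [← hcard, sum_congr rfl fun i _ ↦ hN i, sum_add_distrib]
  simp

end IsPrimitiveRoot

theorem stmt_3_general (p m : ℕ) [Fact p.Prime] (hp : Odd p) (hm : Even m) (hm0 : 0 < m)
    (F : Type*) [Field F] [Fintype F] [Algebra (ZMod p) F]
    (hF : Fintype.card F = p ^ m)
    (ξ : ℂ) (hξ : IsPrimitiveRoot ξ p)
    (f : F → ZMod p)
    (hbent : ∀ a : F, ‖∑ x : F,
        ξ ^ (f x + Algebra.trace (ZMod p) F (a * x)).val‖ = Real.sqrt (p ^ m)) :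
    ∃ (s : ZMod p) (ε : ℤ), (ε = 1 ∨ ε = -1) ∧
      ((univ.filter (fun x : F => f x = s)).card : ℤ)
        = p ^ (m - 1) + ε * (p - 1) * p ^ (m / 2 - 1) ∧
      ∀ i : ZMod p, i ≠ s →
        ((univ.filter (fun x : F => f x = i)).card : ℤ)
          = p ^ (m - 1) - ε * p ^ (m / 2 - 1) := by
  obtain ⟨n, rfl⟩ := hm
  have hW0 : ‖∑ x, ξ ^ (f x).val‖ ^ 2 = (p : ℝ) ^ (2 * n) := by
    have h0 := hbent 0
    simp only [zero_mul, map_zero, add_zero] at h0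
    rw [h0, Real.sq_sqrt (by positivity), two_mul]
  obtain ⟨r, hr, ε, hε, hW⟩ := hξ.exists_sum_pow_eq_sign_mul_of_norm_sq_eq hp _ hW0
  obtain ⟨e, hcard, hfiber⟩ := hξ.exists_card_fiber_eq_of_sum_pow_eq f (c := ε * p ^ n)
    (s := r) (by rw [hW, ZMod.val_cast_of_lt hr]; push_cast; rfl)
  obtain ⟨k, rfl⟩ : ∃ k, n = k + 1 := ⟨n - 1, by omega⟩
  have he : e = p ^ (2 * k + 1) - ε * p ^ k := by
    rw [hF] at hcard
    apply mul_left_cancel₀ (Nat.cast_ne_zero.mpr (NeZero.ne p) : (p : ℤ) ≠ 0)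
    push_cast at hcard
    linear_combination hcard
  rw [show k + 1 + (k + 1) - 1 = 2 * k + 1 by omega, show (k + 1 + (k + 1)) / 2 - 1 = k by omega]
  refine ⟨r, ε, hε, ?_, fun i hi ↦ ?_⟩
  · rw [hfiber, if_pos rfl, he]
    ring
  · rw [hfiber, if_neg hi, he, add_zero]

/-- value distribution of a bent function `f : 𝔽_{p^m} → 𝔽_p` for `m` even. -/
theorem stmt_3 (p m : ℕ) [Fact p.Prime] (hp : Odd p) (hm : Even m) (hm0 : 0 < m)
    (F : Type*) [Field F] [Fintype F] [DecidableEq F] [Algebra (ZMod p) F]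
    (hF : Fintype.card F = p ^ m)
    (ξ : ℂ) (hξ : IsPrimitiveRoot ξ p)
    (f : F → ZMod p)
    (hbent : ∀ a : F, ‖∑ x : F,
        ξ ^ (f x + Algebra.trace (ZMod p) F (a * x)).val‖ = Real.sqrt (p ^ m)) :
    ∃ (s : ZMod p) (ε : ℤ), (ε = 1 ∨ ε = -1) ∧
      ((univ.filter (fun x : F => f x = s)).card : ℤ)
        = p ^ (m - 1) + ε * (p - 1) * p ^ (m / 2 - 1) ∧
      ∀ i : ZMod p, i ≠ s →
        ((univ.filter (fun x : F => f x = i)).card : ℤ)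
          = p ^ (m - 1) - ε * p ^ (m / 2 - 1) :=
  stmt_3_general p m hp hm hm0 F hF ξ hξ f hbent
end

section
/- With notation as above (p odd prime, q = p^m, Π perfect nonlinear), the set Ω̄ = {c_{a,b,c} : a ≠ 0} has exactly p·q·(q−1) elements, and the free G-action (G = 𝔽_p^*×𝔽_p of order p(p−1)) partitions Ω̄ into exactly p^m(p^m−1)/(p−1) orbits, each of size (p−1)p. -/
open Finset

/-- The set of codewords `c_{a,b,c}` with `a ≠ 0` of the code `C̄_Π`. -/
def OmegaBar (p : ℕ) [Fact p.Prime] (F : Type*) [Field F] [Fintype F]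
    [Algebra (ZMod p) F] (Pl : F → F) : Set (F → ZMod p) :=
  {g | ∃ a b c : F, a ≠ 0 ∧
    g = fun x => Algebra.trace (ZMod p) F (a * Pl x + b * x + c)}

/-- The orbit of a codeword `g` under the action of `G = 𝔽_p^* × 𝔽_p`,
`(α,β)·c_{a,b,c} = c_{αa,αb,αc+β'}`, i.e. `g ↦ α·g + β` pointwise. -/
def codeOrbit (p : ℕ) [Fact p.Prime] (F : Type*) [Field F] [Fintype F]
    [Algebra (ZMod p) F] (g : F → ZMod p) : Set (F → ZMod p) :=
  {h | ∃ (α β : ZMod p), α ≠ 0 ∧ h = fun x => α * g x + β}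

/-!
Since the trace is surjective, `c_{a,b,c}` only depends on `(a, b, Tr c)`, and this
parametrization by `𝔽_q^* × 𝔽_q × 𝔽_p` is injective: if `x ↦ Tr(dΠ(x) + ex)` is constant with
`d ≠ 0`, taking differences at `x + 1` and `x` shows that `Tr(d(Π(x+1) - Π(x)) + e)` vanishes,
and as `Π` is perfect nonlinear this says that the trace vanishes on all of `𝔽_q`.
Hence `|Ω̄| = p q (q-1)`. The same argument shows that every codeword in `Ω̄` is non-constant, so
`(α, β) ↦ αg + β` is injective on `𝔽_p^* × 𝔽_p` and every orbit has `(p-1)p` elements; the orbits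
partition `Ω̄`, so there are `|Ω̄| / ((p-1)p)` of them.
-/

open Function

section Trace

variable {K L : Type*} [Field K] [Field L] [Algebra K L] [FiniteDimensional K L]
  [Algebra.IsSeparable K L]

lemma not_forall_trace_mul_add_eq {d : L} (hd : d ≠ 0) (e : L) (k : K) :
    ¬ ∀ y, Algebra.trace K L (d * y + e) = k := by
  intro H
  obtain ⟨z, hz⟩ := Algebra.trace_surjective K L (k + 1)
  have hk := H (d⁻¹ * (z - e))
  rw [mul_inv_cancel_left₀ hd, sub_add_cancel, hz] at hk
  exact one_ne_zero (add_eq_left.mp hk)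

lemma eq_zero_of_forall_trace_eq {Pl : L → L} (hPl : Surjective fun x => Pl (x + 1) - Pl x)
    {d e : L} {k : K} (H : ∀ x, Algebra.trace K L (d * Pl x + e * x) = k) :
    d = 0 ∧ e = 0 ∧ k = 0 := by
  have hd : d = 0 := by
    by_contra hd
    refine not_forall_trace_mul_add_eq hd e (0 : K) fun y => ?_
    obtain ⟨x, rfl⟩ := hPl y
    calc Algebra.trace K L (d * (Pl (x + 1) - Pl x) + e)
        = Algebra.trace K L (d * Pl (x + 1) + e * (x + 1))
          - Algebra.trace K L (d * Pl x + e * x) := by rw [← map_sub]; ring_nf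
      _ = 0 := by rw [H, H, sub_self]
  subst hd
  have hk : k = 0 := by simpa using (H 0).symm
  refine ⟨rfl, ?_, hk⟩
  by_contra he
  exact not_forall_trace_mul_add_eq he 0 k fun x => by simpa using H x

lemma injective_trace_parametrization {Pl : L → L}
    (hPl : Surjective fun x => Pl (x + 1) - Pl x) :
    Injective fun v : Lˣ × L × K =>
      fun x => Algebra.trace K L (v.1 * Pl x + v.2.1 * x) + v.2.2 := by
  rintro ⟨a, b, t⟩ ⟨a', b', t'⟩ h
  have H : ∀ x, Algebra.trace K L ((a - a' : L) * Pl x + (b - b') * x) = t' - t := by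
    intro x
    rw [show (a - a' : L) * Pl x + (b - b') * x = (a * Pl x + b * x) - (a' * Pl x + b' * x) by
      ring, map_sub]
    linear_combination congrFun h x
  obtain ⟨ha, hb, ht⟩ := eq_zero_of_forall_trace_eq hPl H
  exact Prod.ext (Units.ext (sub_eq_zero.mp ha))
    (Prod.ext (sub_eq_zero.mp hb) (sub_eq_zero.mp ht).symm)

end Trace

lemma injective_affine_comp {X K : Type*} [Field K] {g : X → K} {u v : X} (huv : g u ≠ g v) :
    Injective fun w : Kˣ × K => fun x => (w.1 : K) * g x + w.2 := by
  rintro ⟨α, β⟩ ⟨α', β'⟩ h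
  have hu := congrFun h u
  have hv := congrFun h v
  have hα : (α : K) = α' := by
    have : ((α : K) - α') * (g u - g v) = 0 := by linear_combination hu - hv
    exact sub_eq_zero.mp ((mul_eq_zero.mp this).resolve_right (sub_ne_zero.mpr huv))
  simp only [hα, add_right_inj] at hu
  exact Prod.ext (Units.ext hα) hu

lemma ncard_blocks_mul_eq {α : Type*} {s : Set α} (hs : s.Finite) {f : α → Set α} {k : ℕ}
    (self_mem : ∀ g ∈ s, g ∈ f g) (subset : ∀ g ∈ s, f g ⊆ s)
    (eq_of_mem : ∀ g ∈ s, ∀ h ∈ f g, f h = f g) (ncard_eq : ∀ g ∈ s, (f g).ncard = k) :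
    {S | ∃ g ∈ s, S = f g}.ncard * k = s.ncard := by
  classical
  lift s to Finset α using hs
  have blocks : {S | ∃ g ∈ (s : Set α), S = f g} = ↑(s.image f) := by
    ext S
    simp [eq_comm]
  rw [blocks, Set.ncard_coe_finset, Set.ncard_coe_finset, card_eq_sum_card_image f s,
    sum_const_nat]
  intro b hb
  obtain ⟨g, hg, rfl⟩ := mem_image.mp hb
  rw [← ncard_eq g hg, ← Set.ncard_coe_finset]
  congr 1
  ext h
  simp only [coe_filter, Set.mem_ofPred_eq]
  exact ⟨fun ⟨hh, hfh⟩ => hfh ▸ self_mem h hh,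
    fun hh => ⟨subset g hg hh, eq_of_mem g hg h hh⟩⟩

section Codewords

variable {p : ℕ} [Fact p.Prime] {F : Type*} [Field F] [Fintype F] [Algebra (ZMod p) F]
  {Pl : F → F}

lemma omegaBar_eq_range :
    OmegaBar p F Pl = Set.range fun v : Fˣ × F × ZMod p =>
      fun x => Algebra.trace (ZMod p) F (v.1 * Pl x + v.2.1 * x) + v.2.2 := by
  ext g
  constructor
  · rintro ⟨a, b, c, ha, rfl⟩
    exact ⟨⟨Units.mk0 a ha, b, Algebra.trace (ZMod p) F c⟩, funext fun x => by simp⟩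
  · rintro ⟨⟨a, b, t⟩, rfl⟩
    obtain ⟨c, rfl⟩ := Algebra.trace_surjective (ZMod p) F t
    exact ⟨a, b, c, a.ne_zero, funext fun x => by simp⟩

lemma card_omegaBar (hPl : Surjective fun x => Pl (x + 1) - Pl x) :
    Nat.card (OmegaBar p F Pl) = p * Nat.card F * (Nat.card F - 1) := by
  rw [omegaBar_eq_range, Nat.card_range_of_injective (injective_trace_parametrization hPl),
    Nat.card_prod, Nat.card_prod, Nat.card_units, Nat.card_zmod]
  ring

lemma exists_ne_of_mem_omegaBar (hPl : Surjective fun x => Pl (x + 1) - Pl x)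
    {g : F → ZMod p} (hg : g ∈ OmegaBar p F Pl) : ∃ u v, g u ≠ g v := by
  obtain ⟨a, b, c, ha, rfl⟩ := hg
  by_contra! hconst
  refine ha (eq_zero_of_forall_trace_eq hPl (e := b)
    (k := Algebra.trace (ZMod p) F (a * Pl 0 + b * 0 + c) - Algebra.trace (ZMod p) F c)
    fun x => ?_).1
  rw [← hconst x 0, map_add (Algebra.trace (ZMod p) F) _ c, add_sub_cancel_right]

lemma codeOrbit_eq_range (g : F → ZMod p) :
    codeOrbit p F g =
      Set.range fun w : (ZMod p)ˣ × ZMod p => fun x => (w.1 : ZMod p) * g x + w.2 := by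
  ext h
  constructor
  · rintro ⟨α, β, hα, rfl⟩
    exact ⟨⟨Units.mk0 α hα, β⟩, rfl⟩
  · rintro ⟨⟨α, β⟩, rfl⟩
    exact ⟨α, β, α.ne_zero, rfl⟩

lemma card_codeOrbit {g : F → ZMod p} {u v : F} (huv : g u ≠ g v) :
    Nat.card (codeOrbit p F g) = (p - 1) * p := by
  rw [codeOrbit_eq_range, Nat.card_range_of_injective (injective_affine_comp huv),
    Nat.card_prod, Nat.card_units, Nat.card_zmod]

lemma mem_codeOrbit_self (g : F → ZMod p) : g ∈ codeOrbit p F g :=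
  ⟨1, 0, one_ne_zero, by funext x; simp⟩

lemma codeOrbit_eq_of_mem {g h : F → ZMod p} (hh : h ∈ codeOrbit p F g) :
    codeOrbit p F h = codeOrbit p F g := by
  obtain ⟨α, β, hα, rfl⟩ := hh
  ext k
  constructor
  · rintro ⟨α', β', hα', rfl⟩
    exact ⟨α' * α, α' * β + β', mul_ne_zero hα' hα, by funext x; ring⟩
  · rintro ⟨α', β', hα', rfl⟩
    refine ⟨α' * α⁻¹, β' - α' * α⁻¹ * β, mul_ne_zero hα' (inv_ne_zero hα), ?_⟩
    funext x
    field_simp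
    ring

lemma codeOrbit_subset_omegaBar {g : F → ZMod p} (hg : g ∈ OmegaBar p F Pl) :
    codeOrbit p F g ⊆ OmegaBar p F Pl := by
  obtain ⟨a, b, c, ha, rfl⟩ := hg
  rintro _ ⟨α, β, hα, rfl⟩
  obtain ⟨c', rfl⟩ := Algebra.trace_surjective (ZMod p) F β
  refine ⟨α • a, α • b, α • c + c', smul_ne_zero hα ha, funext fun x => ?_⟩
  rw [← smul_eq_mul, ← map_smul, ← map_add]
  congr 1
  simp only [smul_add, smul_mul_assoc, add_assoc]

end Codewords

theorem stmt_8_general (p m : ℕ) [Fact p.Prime]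
    (F : Type*) [Field F] [Fintype F] [Algebra (ZMod p) F]
    (hF : Fintype.card F = p ^ m)
    (Pl : F → F)
    (hPN : ∀ a : F, a ≠ 0 → Function.Bijective (fun x : F => Pl (x + a) - Pl x)) :
    Nat.card (OmegaBar p F Pl) = p * p ^ m * (p ^ m - 1) ∧
    (∀ g ∈ OmegaBar p F Pl, Nat.card (codeOrbit p F g) = (p - 1) * p) ∧
    Nat.card {S : Set (F → ZMod p) | ∃ g ∈ OmegaBar p F Pl, S = codeOrbit p F g}
      = p ^ m * (p ^ m - 1) / (p - 1) := by
  have hPl := (hPN 1 one_ne_zero).2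
  have hcard : Nat.card (OmegaBar p F Pl) = p * p ^ m * (p ^ m - 1) := by
    rw [card_omegaBar hPl, Nat.card_eq_fintype_card, hF]
  have horbit : ∀ g ∈ OmegaBar p F Pl, Nat.card (codeOrbit p F g) = (p - 1) * p := by
    intro g hg
    obtain ⟨u, v, huv⟩ := exists_ne_of_mem_omegaBar hPl hg
    exact card_codeOrbit huv
  refine ⟨hcard, horbit, ?_⟩
  have hblocks := ncard_blocks_mul_eq (Set.toFinite (OmegaBar p F Pl))
    (fun g _ => mem_codeOrbit_self g) (fun _ hg => codeOrbit_subset_omegaBar hg)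
    (fun _ _ _ hh => codeOrbit_eq_of_mem hh)
    (by simpa only [Nat.card_coe_set_eq] using horbit)
  rw [← Nat.card_coe_set_eq, ← Nat.card_coe_set_eq, hcard] at hblocks
  have hp := (Fact.out : p.Prime).two_le
  refine (Nat.div_eq_of_eq_mul_left (by omega) ?_).symm
  apply Nat.eq_of_mul_eq_mul_right (by omega : 0 < p)
  rw [eq_comm, mul_assoc, hblocks]
  ring

/-- `Ω̄` has exactly `p·q·(q-1)` elements and the free `G`-action partitions it
into exactly `p^m(p^m-1)/(p-1)` orbits, each of size `(p-1)p`. -/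
theorem stmt_8 (p m : ℕ) [Fact p.Prime] (hp : Odd p) (hm : 0 < m)
    (F : Type*) [Field F] [Fintype F] [DecidableEq F] [Algebra (ZMod p) F]
    (hF : Fintype.card F = p ^ m)
    (Pl : F → F)
    (hPN : ∀ a : F, a ≠ 0 → Function.Bijective (fun x : F => Pl (x + a) - Pl x)) :
    Nat.card (OmegaBar p F Pl) = p * p ^ m * (p ^ m - 1) ∧
    (∀ g ∈ OmegaBar p F Pl, Nat.card (codeOrbit p F g) = (p - 1) * p) ∧
    Nat.card {S : Set (F → ZMod p) | ∃ g ∈ OmegaBar p F Pl, S = codeOrbit p F g}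
      = p ^ m * (p ^ m - 1) / (p - 1) :=
  stmt_8_general p m F hF Pl hPN
end
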